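/- arXiv:2206.01357 — 4 statements merged into one kernel-verified Lean document; each statement's English description precedes it below -/
import Mathlib

section
/- The BGN density f(x) = (1/(σ B(α,β))) · [Φ_s((x−μ)/σ)]^{α−1} · [1 − Φ_s((x−μ)/σ)]^{β−1} · φ_s((x−μ)/σ) integrates to 1 over ℝ. -/
open MeasureTheory Real

lemma bgn_aux_integrableOn_exp_neg_rpow {s : ℝ} (hs : 0 < s) :
    IntegrableOn (fun x : ℝ => Real.exp (-(x ^ s))) (Set.Ioi 0) := by
  have hG : IntegrableOn (fun y : ℝ => y ^ (1 / s - 1) * Real.exp (-y)) (Set.Ioi 0) := by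
    have := Real.GammaIntegral_convergent (one_div_pos.mpr hs)
    exact this.congr_fun (fun x _ => by ring) measurableSet_Ioi
  have h := (integrableOn_Ioi_comp_rpow_iff'
      (fun y : ℝ => y ^ (1 / s - 1) * Real.exp (-y)) hs.ne').mpr hG
  refine (integrableOn_congr_fun (fun x hx => ?_) measurableSet_Ioi).mp h
  have hx0 : (0:ℝ) < x := hx
  have h1 : (x ^ s) ^ (1 / s - 1) = x ^ (1 - s) := by
    rw [← Real.rpow_mul hx0.le]
    congr 1
    field_simp
  simp only [smul_eq_mul, h1]
  rw [← mul_assoc, ← Real.rpow_add hx0]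
  norm_num

lemma bgn_aux_integrable_exp_neg_abs_rpow {s : ℝ} (hs : 0 < s) :
    Integrable (fun z : ℝ => Real.exp (-(|z| ^ s))) := by
  have h1 : IntegrableOn (fun z : ℝ => Real.exp (-(|z| ^ s))) (Set.Ioi 0) := by
    refine ((bgn_aux_integrableOn_exp_neg_rpow hs).congr_fun (fun x hx => ?_) measurableSet_Ioi)
    rw [abs_of_pos (Set.mem_Ioi.mp hx)]
  have h2 : IntegrableOn (fun z : ℝ => Real.exp (-(|z| ^ s))) (Set.Iic 0) := by
    have A : MeasurableEmbedding fun x : ℝ => -x :=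
      (Homeomorph.neg ℝ).isClosedEmbedding.measurableEmbedding
    have hmap : (volume : Measure ℝ).restrict (Set.Iic 0)
        = Measure.map (fun x : ℝ => -x) ((volume : Measure ℝ).restrict (Set.Ici 0)) := by
      rw [← Measure.map_neg_eq_self (volume : Measure ℝ)]
      rw [Measure.restrict_map A.measurable measurableSet_Iic]
      congr 1
      ext x
      simp
    rw [IntegrableOn, hmap, A.integrable_map_iff]
    have : IntegrableOn (fun z : ℝ => Real.exp (-(|z| ^ s))) (Set.Ici 0) := by
      rw [integrableOn_Ici_iff_integrableOn_Ioi]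
      exact h1
    exact this.congr_fun (fun x _ => by simp) measurableSet_Ici
  have := h2.union h1
  rw [Set.Iic_union_Ioi] at this; rwa [← integrableOn_univ]

lemma bgn_aux_integral_phi {s : ℝ} (hs : 0 < s) :
    ∫ z : ℝ, s / (2 * Real.Gamma (1 / s)) * Real.exp (-(|z| ^ s)) = 1 := by
  rw [integral_const_mul]
  have h1 : ∫ z : ℝ, Real.exp (-(|z| ^ s))
      = 2 * ∫ x in Set.Ioi (0:ℝ), Real.exp (-(x ^ s)) :=
    integral_comp_abs (f := fun x => Real.exp (-(x ^ s)))
  rw [h1, integral_exp_neg_rpow hs, Real.Gamma_add_one (one_div_ne_zero hs.ne')]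
  have hΓ : Real.Gamma (1 / s) ≠ 0 := (Real.Gamma_pos_of_pos (one_div_pos.mpr hs)).ne'
  field_simp

lemma bgn_aux_beta {α β : ℝ} (hα : 0 < α) (hβ : 0 < β) :
    ∫ u in Set.Ioo (0:ℝ) 1, u ^ (α - 1) * (1 - u) ^ (β - 1)
      = Real.Gamma α * Real.Gamma β / Real.Gamma (α + β) := by
  have hΓ : (0:ℝ) < Real.Gamma (α + β) := Real.Gamma_pos_of_pos (by linarith)
  have hc := Complex.Gamma_mul_Gamma_eq_betaIntegral
    (s := (α:ℂ)) (t := (β:ℂ)) (by simpa using hα) (by simpa using hβ)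
  have hbeta : Complex.betaIntegral (α:ℂ) (β:ℂ)
      = ((∫ u in Set.Ioo (0:ℝ) 1, u ^ (α - 1) * (1 - u) ^ (β - 1) : ℝ) : ℂ) := by
    rw [Complex.betaIntegral]
    rw [show (∫ u in Set.Ioo (0:ℝ) 1, u ^ (α - 1) * (1 - u) ^ (β - 1) : ℝ)
        = ∫ u in (0:ℝ)..1, u ^ (α - 1) * (1 - u) ^ (β - 1) by
      rw [intervalIntegral.integral_of_le zero_le_one, integral_Ioc_eq_integral_Ioo]]
    rw [← intervalIntegral.integral_ofReal]
    refine intervalIntegral.integral_congr (fun x hx => ?_)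
    rw [Set.uIcc_of_le zero_le_one] at hx
    rw [Complex.ofReal_mul, Complex.ofReal_cpow hx.1,
      Complex.ofReal_cpow (by linarith [hx.2] : (0:ℝ) ≤ 1 - x)]
    push_cast
    ring
  have key := hc
  rw [hbeta, Complex.Gamma_ofReal, Complex.Gamma_ofReal,
    show ((α:ℂ) + β) = ((α + β : ℝ) : ℂ) by push_cast; ring, Complex.Gamma_ofReal,
    ← Complex.ofReal_mul, ← Complex.ofReal_mul, Complex.ofReal_inj] at key
  rw [key]
  field_simp

theorem bgn_density_integrates_to_one (α β μ σ s : ℝ)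
    (hα : 0 < α) (hβ : 0 < β) (hσ : 0 < σ) (hs : 0 < s)
    (φ : ℝ → ℝ) (hφ : ∀ z, φ z = s / (2 * Real.Gamma (1 / s)) * Real.exp (-(|z| ^ s)))
    (Φ : ℝ → ℝ) (hΦ : ∀ z, Φ z = ∫ t in Set.Iic z, φ t)
    (B : ℝ) (hB : B = Real.Gamma α * Real.Gamma β / Real.Gamma (α + β)) :
    ∫ x : ℝ, 1 / (σ * B) * Φ ((x - μ) / σ) ^ (α - 1) *
      (1 - Φ ((x - μ) / σ)) ^ (β - 1) * φ ((x - μ) / σ) = 1 := by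
  have hΓs : 0 < Real.Gamma (1 / s) := Real.Gamma_pos_of_pos (one_div_pos.mpr hs)
  have hφpos : ∀ z, 0 < φ z := fun z => by rw [hφ]; positivity
  have hφint : Integrable φ := by
    have h := (bgn_aux_integrable_exp_neg_abs_rpow hs).const_mul (s / (2 * Real.Gamma (1 / s)))
    exact h.congr (Filter.Eventually.of_forall fun z => (hφ z).symm)
  have hφ1 : ∫ z : ℝ, φ z = 1 := by
    rw [integral_congr_ae (Filter.Eventually.of_forall hφ)]
    exact bgn_aux_integral_phi hs
  have hφcont : Continuous φ := by
    have h1 : Continuous fun z : ℝ => s / (2 * Real.Gamma (1 / s)) * Real.exp (-(|z| ^ s)) := by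
      exact continuous_const.mul ((continuous_abs.rpow_const (fun x => Or.inr hs.le)).neg.rexp)
    exact h1.congr (fun z => (hφ z).symm)
  -- derivative of Φ
  have hΦ0 : ∀ u : ℝ, Φ u = Φ 0 + ∫ t in (0:ℝ)..u, φ t := by
    intro u
    have h := intervalIntegral.integral_Iic_sub_Iic (f := φ) (μ := volume)
      (a := 0) (b := u) hφint.integrableOn hφint.integrableOn
    rw [hΦ u, hΦ 0]
    linarith
  have hΦderiv : ∀ x : ℝ, HasDerivAt Φ (φ x) x := by
    intro x
    have h : HasDerivAt (fun u : ℝ => Φ 0 + ∫ t in (0:ℝ)..u, φ t) (φ x) x := by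
      refine HasDerivAt.const_add _ ?_
      exact intervalIntegral.integral_hasDerivAt_right
        hφint.intervalIntegrable
        (hφcont.stronglyMeasurableAtFilter _ _)
        hφcont.continuousAt
    exact (funext hΦ0 ▸ h : HasDerivAt Φ (φ x) x)
  have hΦcont : Continuous Φ := by
    have : Differentiable ℝ Φ := fun x => (hΦderiv x).differentiableAt
    exact this.continuous
  have hmono : StrictMono Φ :=
    strictMono_of_deriv_pos fun x => by rw [(hΦderiv x).deriv]; exact hφpos x
  have htop : Filter.Tendsto Φ Filter.atTop (nhds 1) := by
    have hcov : AECover (volume : Measure ℝ) Filter.atTop fun i : ℝ => Set.Iic i :=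
      aecover_Iic Filter.tendsto_id
    have h := hcov.integral_tendsto_of_countably_generated hφint
    rw [hφ1] at h
    exact h.congr fun x => (hΦ x).symm
  have hbot : Filter.Tendsto Φ Filter.atBot (nhds 0) := by
    have hcov : AECover (volume : Measure ℝ) Filter.atBot fun i : ℝ => Set.Ioi i :=
      aecover_Ioi Filter.tendsto_id
    have h := hcov.integral_tendsto_of_countably_generated hφint
    rw [hφ1] at h
    have heq : ∀ x : ℝ, Φ x = 1 - ∫ t in Set.Ioi x, φ t := by
      intro x
      have h2 := integral_add_compl (measurableSet_Iic (a := x)) hφint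
      rw [Set.compl_Iic, hφ1] at h2
      rw [hΦ x]; linarith
    have : Filter.Tendsto (fun x : ℝ => 1 - ∫ t in Set.Ioi x, φ t) Filter.atBot (nhds (1 - 1)) :=
      tendsto_const_nhds.sub h
    simpa [funext heq] using this
  have hΦmem : ∀ x : ℝ, Φ x ∈ Set.Ioo (0:ℝ) 1 := by
    intro x
    constructor
    · have h0 : 0 ≤ Φ (x - 1) := by
        refine le_of_tendsto hbot ?_
        filter_upwards [Filter.eventually_le_atBot (x - 1)] with y hy
        exact hmono.monotone hy
      exact lt_of_le_of_lt h0 (hmono (by linarith))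
    · have h1 : Φ (x + 1) ≤ 1 := by
        refine ge_of_tendsto htop ?_
        filter_upwards [Filter.eventually_ge_atTop (x + 1)] with y hy
        exact hmono.monotone hy
      exact lt_of_lt_of_le (hmono (by linarith)) h1
  have himg : Φ '' Set.univ = Set.Ioo 0 1 := by
    apply Set.Subset.antisymm
    · rintro y ⟨x, -, rfl⟩
      exact hΦmem x
    · intro y hy
      obtain ⟨a, ha⟩ : ∃ a, Φ a < y := by
        have := hbot.eventually (eventually_lt_nhds hy.1)
        exact (this.exists)
      obtain ⟨b, hb⟩ : ∃ b, y < Φ b := by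
        have := htop.eventually (eventually_gt_nhds hy.2)
        exact (this.exists)
      have := intermediate_value_univ a b hΦcont
      rw [Set.image_univ]
      exact this ⟨ha.le, hb.le⟩
  -- change of variables
  have hCOV : ∫ u in Set.Ioo (0:ℝ) 1, u ^ (α - 1) * (1 - u) ^ (β - 1)
      = ∫ z : ℝ, Φ z ^ (α - 1) * (1 - Φ z) ^ (β - 1) * φ z := by
    have h := integral_image_eq_integral_abs_deriv_smul (f := Φ) (f' := φ)
      MeasurableSet.univ (fun x _ => (hΦderiv x).hasDerivWithinAt)
      (hmono.injective.injOn) (fun u => u ^ (α - 1) * (1 - u) ^ (β - 1))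
    rw [himg, Measure.restrict_univ] at h
    rw [h]
    refine integral_congr_ae (Filter.Eventually.of_forall fun z => ?_)
    simp only [smul_eq_mul]
    rw [abs_of_pos (hφpos z)]
    ring
  have hBpos : 0 < B := by
    rw [hB]
    have := Real.Gamma_pos_of_pos hα
    have := Real.Gamma_pos_of_pos hβ
    have := Real.Gamma_pos_of_pos (show (0:ℝ) < α + β by linarith)
    positivity
  have hmain : ∫ z : ℝ, Φ z ^ (α - 1) * (1 - Φ z) ^ (β - 1) * φ z = B := by
    rw [← hCOV, bgn_aux_beta hα hβ, hB]
  -- scaling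
  have hscale : ∫ x : ℝ, Φ ((x - μ) / σ) ^ (α - 1) * (1 - Φ ((x - μ) / σ)) ^ (β - 1)
        * φ ((x - μ) / σ) = σ * B := by
    have h1 : (∫ x : ℝ, (fun y : ℝ => Φ (y / σ) ^ (α - 1) * (1 - Φ (y / σ)) ^ (β - 1)
        * φ (y / σ)) (x - μ)) = ∫ x : ℝ, Φ (x / σ) ^ (α - 1) * (1 - Φ (x / σ)) ^ (β - 1)
        * φ (x / σ) := integral_sub_right_eq_self
          (fun y : ℝ => Φ (y / σ) ^ (α - 1) * (1 - Φ (y / σ)) ^ (β - 1) * φ (y / σ)) μ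
    have h2 : (∫ x : ℝ, (fun z : ℝ => Φ z ^ (α - 1) * (1 - Φ z) ^ (β - 1) * φ z) (x / σ))
        = |σ| • ∫ z : ℝ, Φ z ^ (α - 1) * (1 - Φ z) ^ (β - 1) * φ z :=
      Measure.integral_comp_div (fun z : ℝ => Φ z ^ (α - 1) * (1 - Φ z) ^ (β - 1) * φ z) σ
    simp only at h1 h2
    rw [h1, h2, hmain, smul_eq_mul, abs_of_pos hσ]
  calc ∫ x : ℝ, 1 / (σ * B) * Φ ((x - μ) / σ) ^ (α - 1) *
      (1 - Φ ((x - μ) / σ)) ^ (β - 1) * φ ((x - μ) / σ)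
      = ∫ x : ℝ, 1 / (σ * B) * (Φ ((x - μ) / σ) ^ (α - 1) *
        (1 - Φ ((x - μ) / σ)) ^ (β - 1) * φ ((x - μ) / σ)) := by
        refine integral_congr_ae (Filter.Eventually.of_forall fun x => ?_); ring
    _ = 1 / (σ * B) * ∫ x : ℝ, Φ ((x - μ) / σ) ^ (α - 1) *
        (1 - Φ ((x - μ) / σ)) ^ (β - 1) * φ ((x - μ) / σ) := integral_const_mul _ _
    _ = 1 := by
        rw [hscale]
        field_simp
end

section
/- For every fixed z ∈ ℝ, the cdf Φ_s(z) of the standardized generalized normal distribution converges as s → ∞ to: 0 if z < −1, (z+1)/2 if |z| < 1, and 1 if z > 1. -/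
/-!
Since `Γ(1/s) / s = Γ(1 + 1/s) → 1`, the normalising constant `s / (2 Γ(1/s))` tends to `1/2`.
Off `t = ±1`, `exp (-|t|^s)` tends to the indicator of `(-1, 1)`, and for `s ≥ 2` it is dominated
by `e · exp (-t²)`; by dominated convergence `Φ_s(z) → |(-1, 1) ∩ (-∞, z]| / 2`.
-/

open MeasureTheory Real Filter Set Topology

lemma Real.tendsto_self_mul_Gamma_nhdsGT_zero :
    Tendsto (fun x : ℝ => x * Gamma x) (𝓝[>] 0) (𝓝 1) := by
  have hcont : ContinuousAt (fun x : ℝ => Gamma (x + 1)) 0 :=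
    ContinuousAt.comp' (by simpa using (differentiableAt_Gamma fun m => by
      linarith [m.cast_nonneg (α := ℝ)]).continuousAt) (continuous_add_const 1).continuousAt
  refine Tendsto.congr' ?_ (by simpa using hcont.tendsto.mono_left nhdsWithin_le_nhds)
  filter_upwards [self_mem_nhdsWithin] with x hx using Gamma_add_one (ne_of_gt hx)

lemma tendsto_div_two_mul_Gamma_one_div_atTop :
    Tendsto (fun s : ℝ => s / (2 * Gamma (1 / s))) atTop (𝓝 (1 / 2)) := by
  have h := ((tendsto_self_mul_Gamma_nhdsGT_zero.comp tendsto_inv_atTop_nhdsGT_zero).const_mul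
    2).inv₀ (by norm_num)
  convert h using 2 with s
  · simp only [Function.comp_apply, one_div, mul_inv, inv_inv]; ring
  · norm_num

lemma tendsto_exp_neg_rpow_of_lt_one {x : ℝ} (h₀ : -1 < x) (h₁ : x < 1) :
    Tendsto (fun s : ℝ => exp (-(x ^ s))) atTop (𝓝 1) := by
  simpa using (tendsto_rpow_atTop_of_base_lt_one x h₀ h₁).neg.rexp

lemma tendsto_exp_neg_rpow_of_one_lt {x : ℝ} (h : 1 < x) :
    Tendsto (fun s : ℝ => exp (-(x ^ s))) atTop (𝓝 0) :=
  tendsto_exp_atBot.comp (tendsto_neg_atTop_atBot.comp (tendsto_rpow_atTop_of_base_gt_one x h))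

lemma tendsto_exp_neg_abs_rpow {t : ℝ} (ht : |t| ≠ 1) :
    Tendsto (fun s : ℝ => exp (-(|t| ^ s))) atTop (𝓝 ((Ioo (-1) 1).indicator 1 t)) := by
  rcases ht.lt_or_gt with h | h
  · rw [indicator_of_mem (show t ∈ Ioo (-1) 1 from abs_lt.mp h), Pi.one_apply]
    exact tendsto_exp_neg_rpow_of_lt_one (by linarith [abs_nonneg t]) h
  · rw [indicator_of_notMem fun (hmem : t ∈ Ioo (-1) 1) => (abs_lt.mpr hmem).not_gt h]
    exact tendsto_exp_neg_rpow_of_one_lt h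

lemma sq_sub_one_le_abs_rpow (t : ℝ) {s : ℝ} (hs : 2 ≤ s) : t ^ 2 - 1 ≤ |t| ^ s := by
  rcases le_or_gt |t| 1 with ht | ht
  · nlinarith [sq_abs t, abs_nonneg t, rpow_nonneg (abs_nonneg t) s]
  · calc t ^ 2 - 1 ≤ |t| ^ (2 : ℝ) := by rw [rpow_two, sq_abs]; linarith
      _ ≤ |t| ^ s := rpow_le_rpow_of_exponent_le ht.le hs

lemma ae_abs_ne_one : ∀ᵐ t : ℝ, |t| ≠ 1 := by
  filter_upwards [((countable_singleton 1).insert (-1)).ae_notMem volume] with t ht h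
  rcases (abs_eq zero_le_one).mp h with rfl | rfl <;> simp at ht

theorem tendsto_setIntegral_exp_neg_abs_rpow (S : Set ℝ) :
    Tendsto (fun s : ℝ => ∫ t in S, exp (-(|t| ^ s))) atTop
      (𝓝 (volume.real (Ioo (-1) 1 ∩ S))) := by
  rw [← measureReal_restrict_apply measurableSet_Ioo, ← integral_indicator_one measurableSet_Ioo]
  refine tendsto_integral_filter_of_dominated_convergence (fun t => exp 1 * exp (-1 * t ^ 2))
    (.of_forall fun s => (by fun_prop : Measurable _).aestronglyMeasurable) ?_
    ((integrable_exp_neg_mul_sq one_pos).const_mul _).restrict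
    (ae_restrict_of_ae (ae_abs_ne_one.mono fun t => tendsto_exp_neg_abs_rpow))
  filter_upwards [eventually_ge_atTop 2] with s hs
  refine .of_forall fun t => ?_
  rw [norm_of_nonneg (exp_pos _).le, ← exp_add, exp_le_exp]
  linarith [sq_sub_one_le_abs_rpow t hs]

theorem bgn_Phi_limit (z : ℝ)
    (Φ : ℝ → ℝ → ℝ)
    (hΦ : ∀ s z, Φ s z =
      ∫ t in Set.Iic z, s / (2 * Real.Gamma (1 / s)) * Real.exp (-(|t| ^ s))) :
    (z < -1 → Tendsto (fun s : ℝ => Φ s z) atTop (nhds 0)) ∧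
    (|z| < 1 → Tendsto (fun s : ℝ => Φ s z) atTop (nhds ((z + 1) / 2))) ∧
    (1 < z → Tendsto (fun s : ℝ => Φ s z) atTop (nhds 1)) := by
  have hlim : Tendsto (fun s => Φ s z) atTop (𝓝 (1 / 2 * volume.real (Ioo (-1) 1 ∩ Iic z))) := by
    simp_rw [hΦ, integral_const_mul]
    exact tendsto_div_two_mul_Gamma_one_div_atTop.mul (tendsto_setIntegral_exp_neg_abs_rpow _)
  refine ⟨fun hz => ?_, fun hz => ?_, fun hz => ?_⟩
  · have hempty : Ioo (-1) 1 ∩ Iic z = ∅ :=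
      eq_empty_of_forall_notMem fun t ⟨⟨ht, _⟩, htz⟩ => by linarith [mem_Iic.mp htz]
    simpa [hempty] using hlim
  · obtain ⟨hz₀, hz₁⟩ := abs_lt.mp hz
    have hIoc : Ioo (-1) 1 ∩ Iic z = Ioc (-1) z :=
      ext fun t => ⟨fun ⟨⟨h₀, _⟩, h⟩ => ⟨h₀, h⟩, fun ⟨h₀, h⟩ => ⟨⟨h₀, h.trans_lt hz₁⟩, h⟩⟩
    rwa [hIoc, volume_real_Ioc_of_le hz₀.le, sub_neg_eq_add, one_div_mul_eq_div] at hlim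
  · rwa [inter_eq_left.mpr fun t ht => mem_Iic.mpr (ht.2.trans hz).le,
      volume_real_Ioo_of_le (by norm_num), sub_neg_eq_add, one_add_one_eq_two,
      one_div_mul_cancel two_ne_zero] at hlim
end

section
/- For μ − σ < x < μ + σ with (x−μ)/σ ≠ 0 avoided or handled, the BGN density f(x; α,β,μ,σ,s) converges as s → ∞ to (1/(2σ)) f_Beta((1/2)((x−μ)/σ + 1)), where f_Beta is the beta(α,β) density; and f(x) → 0 for |x − μ| > σ. -/
/-! For `s → ∞` the generalized normal density `φ_s` tends to `1/2` on `(-1, 1)` and to `0`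
off `[-1, 1]`, under the Gaussian majorant `e · exp (-t²)` once `s ≥ 2`; dominated convergence
gives `Φ_s(z) → (z + 1) / 2` for `|z| < 1`, hence the beta limit.

For `z > 1` the tail `T = 1 - Φ_s(z)` satisfies `T ≤ φ_s(z)`, and integrating over
`(z, (z^s + 1)^{1/s}]` together with Bernoulli's inequality gives
`φ_s(z) / T ≤ e s (z^s + 1) / z`. Hence
`T^{β-1} φ_s(z) = T^β · φ_s(z) / T ≤ φ_s(z)^β · e s (z^s + 1) / z → 0`, since `φ_s(z)^β` decays
like `exp (-β z^s)` and `s ≤ z^s / log z`. The case `z < -1` is the mirror image. -/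

open MeasureTheory Real Filter

open Set Topology

noncomputable section

def genNormalConst (s : ℝ) : ℝ := s / (2 * Gamma (1 / s))

def genNormalPDF (s t : ℝ) : ℝ := genNormalConst s * exp (-(|t| ^ s))

def genNormalCDF (s z : ℝ) : ℝ := ∫ t in Iic z, genNormalPDF s t

def genNormalTail (s z : ℝ) : ℝ := ∫ t in Ioi z, genNormalPDF s t

def bgnKernel (α β s z : ℝ) : ℝ :=
  genNormalCDF s z ^ (α - 1) * (1 - genNormalCDF s z) ^ (β - 1) * genNormalPDF s z

end

section GeneralizedNormal

variable {s z t : ℝ}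

theorem genNormalConst_eq (hs : 0 < s) : genNormalConst s = 1 / (2 * Gamma (1 / s + 1)) := by
  have hΓ := Gamma_pos_of_pos (one_div_pos.2 hs)
  rw [genNormalConst, Gamma_add_one (one_div_pos.2 hs).ne']
  field_simp

theorem genNormalConst_pos (hs : 0 < s) : 0 < genNormalConst s :=
  div_pos hs (mul_pos two_pos (Gamma_pos_of_pos (one_div_pos.2 hs)))

theorem tendsto_genNormalConst : Tendsto genNormalConst atTop (𝓝 (1 / 2)) := by
  have hΓ : ContinuousAt Gamma 1 := (differentiableAt_Gamma fun m hm => by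
    linarith [(Nat.cast_nonneg m : (0 : ℝ) ≤ m)]).continuousAt
  have h : Tendsto (fun s : ℝ => 1 / s + 1) atTop (𝓝 1) := by
    simpa using tendsto_inv_atTop_zero.add_const (1 : ℝ)
  have := ((hΓ.tendsto.comp h).const_mul 2).inv₀ (by norm_num)
  rw [Gamma_one] at this
  refine (this.congr' ?_).trans_eq (by norm_num)
  filter_upwards [eventually_gt_atTop 0] with s hs
  simp [genNormalConst_eq hs]

theorem genNormalPDF_nonneg (hs : 0 < s) (t : ℝ) : 0 ≤ genNormalPDF s t :=
  mul_nonneg (genNormalConst_pos hs).le (exp_nonneg _)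

theorem genNormalPDF_neg (s t : ℝ) : genNormalPDF s (-t) = genNormalPDF s t := by
  rw [genNormalPDF, abs_neg, genNormalPDF]

theorem continuous_genNormalPDF (hs : 0 < s) : Continuous (genNormalPDF s) :=
  continuous_const.mul (continuous_abs.rpow_const fun _ => Or.inr hs.le).neg.rexp

theorem integral_genNormalPDF (hs : 0 < s) : ∫ t, genNormalPDF s t = 1 := by
  have hΓ := Gamma_pos_of_pos (one_div_pos.2 hs)
  simp only [genNormalPDF]
  rw [integral_const_mul, integral_comp_abs (f := fun t => exp (-(t ^ s))),
    integral_exp_neg_rpow hs, genNormalConst_eq hs]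
  field_simp

-- `integral_comp_abs` holds without integrability, so a nonzero total mass forces it.
theorem integrable_genNormalPDF (hs : 0 < s) : Integrable (genNormalPDF s) :=
  Integrable.of_integral_ne_zero (by rw [integral_genNormalPDF hs]; exact one_ne_zero)

theorem one_sub_genNormalCDF (hs : 0 < s) (z : ℝ) :
    1 - genNormalCDF s z = genNormalTail s z := by
  rw [← integral_genNormalPDF hs, ← intervalIntegral.integral_Iic_add_Ioi
    (integrable_genNormalPDF hs).integrableOn (integrable_genNormalPDF hs).integrableOn,
    genNormalCDF, genNormalTail, add_sub_cancel_left]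

theorem genNormalCDF_eq_tail_neg (s z : ℝ) : genNormalCDF s z = genNormalTail s (-z) := by
  simp only [genNormalCDF, genNormalTail, ← integral_comp_neg_Iic, genNormalPDF_neg]

theorem genNormalTail_nonneg (hs : 0 < s) (z : ℝ) : 0 ≤ genNormalTail s z :=
  setIntegral_nonneg measurableSet_Ioi fun t _ => genNormalPDF_nonneg hs t

theorem tendsto_genNormalPDF_of_abs_lt_one (ht : |t| < 1) :
    Tendsto (genNormalPDF · t) atTop (𝓝 (1 / 2)) := by
  have h := tendsto_rpow_atTop_of_base_lt_one |t| (by linarith [abs_nonneg t]) ht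
  simpa [genNormalPDF] using tendsto_genNormalConst.mul (h.neg.rexp)

theorem tendsto_genNormalPDF_of_one_lt_abs (ht : 1 < |t|) :
    Tendsto (genNormalPDF · t) atTop (𝓝 0) := by
  have h := tendsto_rpow_atTop_of_base_gt_one |t| ht
  simpa [genNormalPDF] using tendsto_genNormalConst.mul (tendsto_exp_neg_atTop_nhds_zero.comp h)

theorem exp_neg_abs_rpow_le (hs : 2 ≤ s) (t : ℝ) : exp (-(|t| ^ s)) ≤ exp 1 * exp (-t ^ 2) := by
  rw [← exp_add, exp_le_exp]
  rcases le_or_gt |t| 1 with h | h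
  · nlinarith [rpow_nonneg (abs_nonneg t) s, sq_abs t, abs_nonneg t]
  · have := rpow_le_rpow_of_exponent_le h.le hs
    rw [rpow_two, sq_abs] at this
    linarith

theorem tendsto_genNormalCDF_of_abs_lt_one (hz : |z| < 1) :
    Tendsto (genNormalCDF · z) atTop (𝓝 ((z + 1) / 2)) := by
  obtain ⟨hz₁, hz₂⟩ := abs_lt.1 hz
  have hlim : ∫ t in Iic z, (Ioo (-1) 1).indicator (fun _ => (1 / 2 : ℝ)) t = (z + 1) / 2 := by
    rw [integral_indicator measurableSet_Ioo, Measure.restrict_restrict measurableSet_Ioo,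
      show Ioo (-1) 1 ∩ Iic z = Ioc (-1) z from ext fun t => ⟨fun h => ⟨h.1.1, h.2⟩,
        fun h => ⟨⟨h.1, h.2.trans_lt hz₂⟩, h.2⟩⟩, setIntegral_const,
      volume_real_Ioc_of_le (by linarith), smul_eq_mul]
    ring
  have hne : ∀ᵐ t : ℝ, t ∉ ({-1, 1} : Set ℝ) :=
    measure_eq_zero_iff_ae_notMem.1 ((toFinite _).measure_zero _)
  rw [← hlim]
  refine tendsto_integral_filter_of_dominated_convergence (fun t => exp 1 * exp (-t ^ 2)) ?_ ?_
    ?_ ?_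
  · filter_upwards [eventually_gt_atTop 0] with s hs
    exact (continuous_genNormalPDF hs).aestronglyMeasurable
  · filter_upwards [eventually_ge_atTop 2,
      tendsto_genNormalConst.eventually_lt_const one_half_lt_one] with s hs hc
    refine ae_of_all _ fun t => ?_
    rw [norm_of_nonneg (genNormalPDF_nonneg (by linarith) t)]
    calc genNormalPDF s t ≤ 1 * exp (-(|t| ^ s)) :=
          mul_le_mul_of_nonneg_right hc.le (exp_nonneg _)
      _ ≤ _ := (one_mul _).trans_le (exp_neg_abs_rpow_le hs t)
  · simpa using ((integrable_exp_neg_mul_sq one_pos).const_mul (exp 1)).restrict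
  · filter_upwards [ae_restrict_of_ae hne] with t ht
    rcases lt_trichotomy |t| 1 with h | h | h
    · rw [indicator_of_mem (show t ∈ Ioo (-1) 1 from abs_lt.1 h)]
      exact tendsto_genNormalPDF_of_abs_lt_one h
    · rcases abs_eq zero_le_one |>.1 h with rfl | rfl <;> simp at ht
    · rw [indicator_of_notMem fun h' : t ∈ Ioo (-1) 1 => h.not_gt (abs_lt.2 h')]
      exact tendsto_genNormalPDF_of_one_lt_abs h

theorem rpow_add_sub_le_rpow (hs : 1 ≤ s) (hz : 1 ≤ z) (hzt : z ≤ t) :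
    z ^ s + (t - z) ≤ t ^ s := by
  have hz₀ : 0 < z := by linarith
  have h₁ : z ^ (s - 1) ≤ t ^ (s - 1) := rpow_le_rpow hz₀.le hzt (by linarith)
  have h₂ : 1 ≤ z ^ (s - 1) := one_le_rpow hz (by linarith)
  rw [← sub_add_cancel s 1, rpow_add_one hz₀.ne', rpow_add_one (by linarith : t ≠ 0)]
  nlinarith

theorem genNormalTail_le_genNormalPDF (hs : 1 ≤ s) (hz : 1 ≤ z) :
    genNormalTail s z ≤ genNormalPDF s z := by
  have hbound : ∀ t ∈ Ioi z, genNormalPDF s t ≤ genNormalPDF s z * exp z * exp (-t) := by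
    intro t ht
    rw [genNormalPDF, genNormalPDF, abs_of_pos (by linarith [mem_Ioi.1 ht]),
      abs_of_pos (by linarith), mul_assoc, mul_assoc, ← exp_add, ← exp_add]
    gcongr
    · exact (genNormalConst_pos (by linarith)).le
    · linarith [rpow_add_sub_le_rpow hs hz (mem_Ioi.1 ht).le]
  calc genNormalTail s z ≤ ∫ t in Ioi z, genNormalPDF s z * exp z * exp (-t) :=
        setIntegral_mono_on (integrable_genNormalPDF (by linarith)).integrableOn
          ((integrableOn_exp_neg_Ioi z).const_mul _) measurableSet_Ioi hbound
    _ = genNormalPDF s z := by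
        rw [integral_const_mul, integral_exp_neg_Ioi, mul_assoc, ← exp_add, add_neg_cancel,
          exp_zero, mul_one]

theorem div_mul_le_rpow_add_one_rpow_inv_sub (hs : 1 ≤ s) (hz : 0 < z) :
    z / (s * (z ^ s + 1)) ≤ (z ^ s + 1) ^ s⁻¹ - z := by
  set y := z ^ s with hy
  set w := (y + 1) ^ s⁻¹
  have hs₀ : 0 < s := by linarith
  have hy₀ : 0 < y := rpow_pos_of_pos hz s
  have hw : w ^ s = y + 1 := rpow_inv_rpow (by positivity) hs₀.ne'
  have hzw : z ≤ w := by
    calc z = y ^ s⁻¹ := (rpow_rpow_inv hz.le hs₀.ne').symm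
      _ ≤ w := rpow_le_rpow hy₀.le (by linarith) (inv_nonneg.2 hs₀.le)
  have hw₀ : 0 < w := hz.trans_le hzw
  -- Bernoulli's inequality at `z / w`, where `(z / w) ^ s = y / (y + 1)`
  have hbern := one_add_mul_self_le_rpow_one_add (s := z / w - 1)
    (by linarith [div_nonneg hz.le hw₀.le]) hs
  rw [add_sub_cancel, div_rpow hz.le hw₀.le, hw, ← hy, div_sub_one hw₀.ne', mul_div_assoc',
    one_add_div hw₀.ne', div_le_div_iff₀ hw₀ (by positivity)] at hbern
  rw [div_le_iff₀ (by positivity)]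
  nlinarith

theorem le_genNormalTail (hs : 1 ≤ s) (hz : 0 < z) :
    z / (s * (z ^ s + 1)) * exp (-1) * genNormalPDF s z ≤ genNormalTail s z := by
  have hs₀ : 0 < s := by linarith
  set w := (z ^ s + 1) ^ s⁻¹
  have hlen := div_mul_le_rpow_add_one_rpow_inv_sub hs hz
  have hzw : z ≤ w := by linarith [div_nonneg hz.le (by positivity : 0 ≤ s * (z ^ s + 1))]
  have hpdf : ∀ t ∈ Ioc z w, exp (-1) * genNormalPDF s z ≤ genNormalPDF s t := by
    intro t ht
    have ht₀ : 0 < t := hz.trans ht.1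
    have : t ^ s ≤ z ^ s + 1 := by
      calc t ^ s ≤ w ^ s := rpow_le_rpow ht₀.le ht.2 hs₀.le
        _ = z ^ s + 1 := rpow_inv_rpow (by positivity) hs₀.ne'
    rw [genNormalPDF, genNormalPDF, abs_of_pos hz, abs_of_pos ht₀, mul_left_comm, ← exp_add]
    gcongr
    · exact (genNormalConst_pos hs₀).le
    · linarith
  calc z / (s * (z ^ s + 1)) * exp (-1) * genNormalPDF s z
      ≤ (w - z) * (exp (-1) * genNormalPDF s z) := by
        rw [← mul_assoc]
        gcongr
        exact genNormalPDF_nonneg hs₀ z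
    _ = ∫ t in Ioc z w, exp (-1) * genNormalPDF s z := by
        rw [setIntegral_const, volume_real_Ioc_of_le hzw, smul_eq_mul]
    _ ≤ ∫ t in Ioc z w, genNormalPDF s t :=
        setIntegral_mono_on (integrableOn_const measure_Ioc_lt_top.ne)
          (integrable_genNormalPDF hs₀).integrableOn measurableSet_Ioc hpdf
    _ ≤ genNormalTail s z :=
        setIntegral_mono_set (integrable_genNormalPDF hs₀).integrableOn
          (ae_of_all _ (genNormalPDF_nonneg hs₀)) Ioc_subset_Ioi_self.eventuallyLE

theorem genNormalTail_rpow_sub_one_mul_le {γ : ℝ} (hs : 1 ≤ s) (hz : 1 ≤ z) (hγ : 0 < γ) :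
    genNormalTail s z ^ (γ - 1) * genNormalPDF s z ≤
      genNormalPDF s z ^ γ * (exp 1 * s * (z ^ s + 1) / z) := by
  have hs₀ : 0 < s := by linarith
  have hz₀ : 0 < z := by linarith
  have hφ : 0 < genNormalPDF s z := mul_pos (genNormalConst_pos hs₀) (exp_pos _)
  have hlow := le_genNormalTail hs hz₀
  have hT : 0 < genNormalTail s z := lt_of_lt_of_le (by positivity) hlow
  have hpow : genNormalTail s z ^ γ ≤ genNormalPDF s z ^ γ :=
    rpow_le_rpow hT.le (genNormalTail_le_genNormalPDF hs hz) hγ.le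
  have hratio : genNormalPDF s z / genNormalTail s z ≤ exp 1 * s * (z ^ s + 1) / z := by
    rw [div_le_iff₀ hT]
    calc genNormalPDF s z
        = exp 1 * s * (z ^ s + 1) / z *
            (z / (s * (z ^ s + 1)) * exp (-1) * genNormalPDF s z) := by
          rw [exp_neg]
          field_simp
      _ ≤ _ := by gcongr
  calc genNormalTail s z ^ (γ - 1) * genNormalPDF s z
      = genNormalTail s z ^ γ * (genNormalPDF s z / genNormalTail s z) := by
        rw [rpow_sub_one hT.ne']; ring
    _ ≤ _ := mul_le_mul hpow hratio (by positivity) (by positivity)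

theorem tendsto_mul_rpow_add_one_mul_exp_neg {γ : ℝ} (hz : 1 < z) (hγ : 0 < γ) :
    Tendsto (fun s => s * (z ^ s + 1) * exp (-(γ * z ^ s))) atTop (𝓝 0) := by
  have hlog : 0 < log z := log_pos hz
  have hlim := ((tendsto_rpow_mul_exp_neg_mul_atTop_nhds_zero 2 γ hγ).comp
    (tendsto_rpow_atTop_of_base_gt_one z hz)).const_mul (2 / log z)
  rw [mul_zero] at hlim
  refine squeeze_zero' ?_ ?_ hlim
  · filter_upwards [eventually_ge_atTop 0] with s hs
    positivity
  · filter_upwards [eventually_ge_atTop 0] with s hs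
    have hy : 1 ≤ z ^ s := one_le_rpow hz.le hs
    have hsy : s * log z ≤ z ^ s := by
      rw [← log_rpow (by linarith)]
      exact log_le_self (by positivity)
    have hpoly : s * (z ^ s + 1) ≤ 2 / log z * (z ^ s) ^ (2 : ℝ) := by
      rw [rpow_two, div_mul_eq_mul_div, le_div_iff₀ hlog]
      nlinarith
    calc s * (z ^ s + 1) * exp (-(γ * z ^ s))
        ≤ 2 / log z * (z ^ s) ^ (2 : ℝ) * exp (-(γ * z ^ s)) := by gcongr
      _ = _ := by simp only [Function.comp_apply, neg_mul, mul_assoc]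

theorem tendsto_genNormalTail_rpow_sub_one_mul_genNormalPDF {γ : ℝ} (hz : 1 < z) (hγ : 0 < γ) :
    Tendsto (fun s => genNormalTail s z ^ (γ - 1) * genNormalPDF s z) atTop (𝓝 0) := by
  have hlim := ((tendsto_genNormalConst.rpow_const (Or.inr hγ.le)).mul_const (exp 1 / z)).mul
    (tendsto_mul_rpow_add_one_mul_exp_neg hz hγ)
  rw [mul_zero] at hlim
  have hbound : Tendsto (fun s => genNormalPDF s z ^ γ * (exp 1 * s * (z ^ s + 1) / z)) atTop
      (𝓝 0) := by
    refine hlim.congr' ?_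
    filter_upwards [eventually_gt_atTop 0] with s hs
    rw [genNormalPDF, mul_rpow (genNormalConst_pos hs).le (exp_nonneg _), ← exp_mul,
      abs_of_pos (by linarith)]
    ring_nf
  refine squeeze_zero' ?_ ?_ hbound
  · filter_upwards [eventually_gt_atTop 0] with s hs
    exact mul_nonneg (rpow_nonneg (genNormalTail_nonneg hs z) _) (genNormalPDF_nonneg hs z)
  · filter_upwards [eventually_ge_atTop 1] with s hs
    exact genNormalTail_rpow_sub_one_mul_le hs hz.le hγ

theorem tendsto_genNormalTail (hz : 1 < z) : Tendsto (genNormalTail · z) atTop (𝓝 0) := by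
  refine squeeze_zero' ?_ ?_
    (tendsto_genNormalPDF_of_one_lt_abs (by rwa [abs_of_pos (by linarith)]))
  · filter_upwards [eventually_gt_atTop 0] with s hs
    exact genNormalTail_nonneg hs z
  · filter_upwards [eventually_ge_atTop 1] with s hs
    exact genNormalTail_le_genNormalPDF hs hz.le

end GeneralizedNormal

section BGNKernel

variable {z : ℝ}

theorem tendsto_bgnKernel_of_abs_lt_one (α β : ℝ) (hz : |z| < 1) :
    Tendsto (bgnKernel α β · z) atTop
      (𝓝 (((z + 1) / 2) ^ (α - 1) * (1 - (z + 1) / 2) ^ (β - 1) * (1 / 2))) := by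
  obtain ⟨hz₁, hz₂⟩ := abs_lt.1 hz
  have hΦ := tendsto_genNormalCDF_of_abs_lt_one hz
  exact ((hΦ.rpow_const (Or.inl (by linarith : (0 : ℝ) < (z + 1) / 2).ne')).mul
    ((hΦ.const_sub 1).rpow_const (Or.inl (by linarith : (0 : ℝ) < 1 - (z + 1) / 2).ne'))).mul
    (tendsto_genNormalPDF_of_abs_lt_one hz)

theorem tendsto_bgnKernel_of_one_lt_abs {α β : ℝ} (hα : 0 < α) (hβ : 0 < β) (hz : 1 < |z|) :
    Tendsto (bgnKernel α β · z) atTop (𝓝 0) := by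
  have htail : ∀ {w p γ : ℝ}, 1 < w → 0 < γ → Tendsto (fun s => (1 - genNormalTail s w) ^ p *
      (genNormalTail s w ^ (γ - 1) * genNormalPDF s w)) atTop (𝓝 0) := fun hw hγ => by
    simpa using
      (((tendsto_genNormalTail hw).const_sub 1).rpow_const (Or.inl (by norm_num))).mul
        (tendsto_genNormalTail_rpow_sub_one_mul_genNormalPDF hw hγ)
  rcases le_or_gt z 0 with hz₀ | hz₀
  · rw [abs_of_nonpos hz₀] at hz
    refine (htail (p := β - 1) hz hα).congr fun s => ?_
    rw [bgnKernel, genNormalCDF_eq_tail_neg, ← genNormalPDF_neg s z]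
    ring
  · rw [abs_of_pos hz₀] at hz
    refine (htail (p := α - 1) hz hβ).congr' ?_
    filter_upwards [eventually_gt_atTop 0] with s hs
    rw [bgnKernel, ← one_sub_genNormalCDF hs, sub_sub_cancel]
    ring

end BGNKernel

theorem bgn_density_limit_beta_general (α β μ σ : ℝ)
    (hα : 0 < α) (hβ : 0 < β) (hσ : 0 < σ)
    (φ : ℝ → ℝ → ℝ)
    (hφ : ∀ s z, φ s z = s / (2 * Real.Gamma (1 / s)) * Real.exp (-(|z| ^ s)))
    (Φ : ℝ → ℝ → ℝ) (hΦ : ∀ s z, Φ s z = ∫ t in Set.Iic z, φ s t)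
    (B : ℝ)
    (f : ℝ → ℝ → ℝ)
    (hf : ∀ s x, f s x = 1 / (σ * B) * Φ s ((x - μ) / σ) ^ (α - 1) *
      (1 - Φ s ((x - μ) / σ)) ^ (β - 1) * φ s ((x - μ) / σ)) :
    (∀ x : ℝ, μ - σ < x → x < μ + σ → x ≠ μ →
      Tendsto (fun s : ℝ => f s x) atTop
        (nhds (1 / (2 * σ) *
          ((((x - μ) / σ + 1) / 2) ^ (α - 1) * (1 - ((x - μ) / σ + 1) / 2) ^ (β - 1) / B)))) ∧
    (∀ x : ℝ, σ < |x - μ| → Tendsto (fun s : ℝ => f s x) atTop (nhds 0)) := by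
  obtain rfl : φ = genNormalPDF := funext fun s => funext (hφ s)
  obtain rfl : Φ = genNormalCDF := funext fun s => funext (hΦ s)
  have hf' : ∀ s x, f s x = 1 / (σ * B) * bgnKernel α β s ((x - μ) / σ) := fun s x => by
    rw [hf, bgnKernel]
    ring
  simp only [hf']
  refine ⟨fun x hx₁ hx₂ _ => ?_, fun x hx => ?_⟩
  · have hz : |(x - μ) / σ| < 1 := by
      rw [abs_div, abs_of_pos hσ, div_lt_one hσ, abs_lt]
      constructor <;> linarith
    convert (tendsto_bgnKernel_of_abs_lt_one α β hz).const_mul (1 / (σ * B)) using 2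
    ring
  · have hz : 1 < |(x - μ) / σ| := by rwa [abs_div, abs_of_pos hσ, one_lt_div hσ]
    simpa using (tendsto_bgnKernel_of_one_lt_abs hα hβ hz).const_mul (1 / (σ * B))

theorem bgn_density_limit_beta (α β μ σ : ℝ)
    (hα : 0 < α) (hβ : 0 < β) (hσ : 0 < σ)
    (φ : ℝ → ℝ → ℝ)
    (hφ : ∀ s z, φ s z = s / (2 * Real.Gamma (1 / s)) * Real.exp (-(|z| ^ s)))
    (Φ : ℝ → ℝ → ℝ) (hΦ : ∀ s z, Φ s z = ∫ t in Set.Iic z, φ s t)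
    (B : ℝ) (hB : B = Real.Gamma α * Real.Gamma β / Real.Gamma (α + β))
    (f : ℝ → ℝ → ℝ)
    (hf : ∀ s x, f s x = 1 / (σ * B) * Φ s ((x - μ) / σ) ^ (α - 1) *
      (1 - Φ s ((x - μ) / σ)) ^ (β - 1) * φ s ((x - μ) / σ)) :
    (∀ x : ℝ, μ - σ < x → x < μ + σ → x ≠ μ →
      Tendsto (fun s : ℝ => f s x) atTop
        (nhds (1 / (2 * σ) *
          ((((x - μ) / σ + 1) / 2) ^ (α - 1) * (1 - ((x - μ) / σ + 1) / 2) ^ (β - 1) / B)))) ∧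
    (∀ x : ℝ, σ < |x - μ| → Tendsto (fun s : ℝ => f s x) atTop (nhds 0)) :=
  bgn_density_limit_beta_general α β μ σ hα hβ hσ φ hφ Φ hΦ B f hf
end

section
/- If U has a beta(α,β) distribution and X = μ − σ[F_Γ^{-1}(1−2U)]^{1/s} when U ≤ 1/2, X = μ + σ[F_Γ^{-1}(2U−1)]^{1/s} when U > 1/2, then X has the BGN(α,β,μ,σ,s) distribution. -/
open MeasureTheory Real

open Set


noncomputable def bgnJ (FΓ : ℝ → ℝ) : ℝ → ℝ := fun u => sInf {x : ℝ | 0 ≤ x ∧ u ≤ FΓ x}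

lemma bgn_hfun_measurable {μ σ s : ℝ} (J : ℝ → ℝ) (hJ : Measurable J) :
    Measurable (fun u : ℝ => if u ≤ 1/2 then μ - σ * (J (1 - 2*u)) ^ (1/s)
      else μ + σ * (J (2*u - 1)) ^ (1/s)) := by
  refine Measurable.ite (measurableSet_le measurable_id measurable_const) ?_ ?_ <;> fun_prop

lemma bgn_rho_measurable (α β B : ℝ) :
    Measurable (fun u : ℝ => ENNReal.ofReal
      (if 0 ≤ u ∧ u ≤ 1 then u ^ (α - 1) * (1 - u) ^ (β - 1) / B else 0)) := by
  refine ENNReal.measurable_ofReal.comp ?_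
  refine Measurable.ite (measurableSet_Icc (a := (0:ℝ)) (b := 1)) ?_ measurable_const
  fun_prop

lemma bgn_g_measurable (α β : ℝ) :
    Measurable (fun u : ℝ => u ^ (α - 1) * (1 - u) ^ (β - 1)) := by fun_prop

lemma bgn_alg1 {μ σ x z F : ℝ} (hσ : 0 < σ) (hxz : x = μ + z * σ) :
    μ - σ * F ≤ x ↔ -z ≤ F := by
  subst hxz
  constructor <;> intro h <;> nlinarith

lemma bgn_alg2 {μ σ x z F : ℝ} (hσ : 0 < σ) (hxz : x = μ + z * σ) :
    μ + σ * F ≤ x ↔ F ≤ z := by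
  subst hxz
  constructor <;> intro h <;> nlinarith

lemma bgn_sub {s : ℝ} (hs : 0 < s) {b : ℝ} (hb : 0 ≤ b) :
    ∫ t in (0:ℝ)..b, Real.exp (-(t^s))
      = (1/s) * ∫ u in (0:ℝ)..(b^s), u^(1/s-1) * Real.exp (-u) := by
  have hs' : s ≠ 0 := hs.ne'
  have hbs : (0:ℝ) ≤ b ^ s := Real.rpow_nonneg hb s
  rw [intervalIntegral.integral_of_le hb, intervalIntegral.integral_of_le hbs]
  set g : ℝ → ℝ := Set.indicator (Set.Ioc 0 (b^s)) (fun u => (1/s) * (u^(1/s-1) * Real.exp (-u))) with hg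
  have key := integral_comp_rpow_Ioi_of_pos (g := g) hs
  have h1 : ∀ x ∈ Set.Ioi (0:ℝ), (s * x ^ (s-1)) • g (x^s)
      = Set.indicator (Set.Ioc 0 b) (fun t => Real.exp (-(t^s))) x := by
    intro x hx
    have hx0 : (0:ℝ) < x := hx
    have hmem : x ^ s ∈ Set.Ioc 0 (b^s) ↔ x ∈ Set.Ioc 0 b := by
      constructor
      · rintro ⟨h1', h2'⟩
        refine ⟨hx0, ?_⟩
        by_contra h
        push_neg at h
        exact absurd h2' (not_le.mpr (Real.rpow_lt_rpow hb h hs))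
      · rintro ⟨h1', h2'⟩
        exact ⟨Real.rpow_pos_of_pos hx0 s, Real.rpow_le_rpow hx0.le h2' hs.le⟩
    by_cases hmem' : x ∈ Set.Ioc 0 b
    · rw [Set.indicator_of_mem hmem', hg, Set.indicator_of_mem (hmem.mpr hmem')]
      have h2 : ((x:ℝ)^s)^(1/s-1) = x^(1-s) := by
        rw [← Real.rpow_mul hx0.le]
        congr 1
        field_simp
      have h3 : x ^ (s-1) * x ^ (1-s) = 1 := by
        rw [← Real.rpow_add hx0]
        norm_num
      rw [smul_eq_mul, h2]
      field_simp
      linear_combination h3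
    · rw [Set.indicator_of_notMem hmem', hg,
        Set.indicator_of_notMem (fun h => hmem' (hmem.mp h)), smul_zero]
  have e1 : ∫ t in Set.Ioc 0 b, Real.exp (-(t^s))
      = ∫ x in Set.Ioi (0:ℝ), Set.indicator (Set.Ioc 0 b) (fun t => Real.exp (-(t^s))) x := by
    rw [setIntegral_indicator measurableSet_Ioc,
      Set.inter_eq_self_of_subset_right Set.Ioc_subset_Ioi_self]
  have e3 : ∫ y in Set.Ioi (0:ℝ), g y
      = ∫ u in Set.Ioc 0 (b^s), (1/s) * (u^(1/s-1) * Real.exp (-u)) := by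
    rw [hg, setIntegral_indicator measurableSet_Ioc,
      Set.inter_eq_self_of_subset_right Set.Ioc_subset_Ioi_self]
  rw [e1, ← setIntegral_congr_fun measurableSet_Ioi h1, key, e3, integral_const_mul]

variable {s : ℝ}

lemma bgn_intOn_Ioi (hs : 0 < s) :
    IntegrableOn (fun t : ℝ => Real.exp (-(t^s))) (Set.Ioi 0) := by
  have h1s : 0 < 1/s := by positivity
  have hg : IntegrableOn (fun u : ℝ => (1/s) * (u^(1/s-1) * Real.exp (-u))) (Set.Ioi 0) := by
    have h := (Real.GammaIntegral_convergent h1s).const_mul (1/s)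
    refine IntegrableOn.congr_fun h (fun u hu => ?_) measurableSet_Ioi
    ring
  have key := (integrableOn_Ioi_comp_rpow_iff
    (fun u : ℝ => (1/s) * (u^(1/s-1) * Real.exp (-u))) hs.ne').2 hg
  refine key.congr_fun (fun x hx => ?_) measurableSet_Ioi
  have hx0 : (0:ℝ) < x := hx
  have h2 : ((x:ℝ)^s)^(1/s-1) = x^(1-s) := by
    rw [← Real.rpow_mul hx0.le]; congr 1; field_simp
  have h3 : x ^ (s-1) * x ^ (1-s) = 1 := by
    rw [← Real.rpow_add hx0]; norm_num
  beta_reduce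
  rw [smul_eq_mul, h2, abs_of_pos hs]
  field_simp
  linear_combination h3

lemma bgn_intOn_Iic (hs : 0 < s) :
    IntegrableOn (fun t : ℝ => Real.exp (-(|t|^s))) (Set.Iic 0) := by
  have h1 : IntegrableOn (fun t : ℝ => Real.exp (-(|t|^s))) (Set.Ioi 0) := by
    refine (bgn_intOn_Ioi hs).congr_fun (fun t ht => ?_) measurableSet_Ioi
    rw [abs_of_pos ht]
  have h2 : IntegrableOn (fun t : ℝ => Real.exp (-(|t|^s))) (Set.Ici 0) :=
    Iff.mpr (integrableOn_Ici_iff_integrableOn_Ioi (by simp)) h1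
  have h3 := (MeasurePreserving.integrableOn_comp_preimage
    (Measure.measurePreserving_neg (volume : Measure ℝ))
    (Homeomorph.neg ℝ).measurableEmbedding).2 h2
  have h4 : (fun x : ℝ => -x) ⁻¹' (Set.Ici 0) = Set.Iic 0 := by
    ext t; simp
  rw [h4] at h3
  refine h3.congr_fun (fun t _ => ?_) measurableSet_Iic
  simp [abs_neg]

lemma bgn_I0 (hs : 0 < s) :
    ∫ t in Set.Iic (0:ℝ), Real.exp (-(|t|^s)) = Real.Gamma (1/s) / s := by
  have h0 : ∫ t in Set.Iic (0:ℝ), Real.exp (-(|t|^s))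
      = ∫ t in Set.Iic (0:ℝ), (fun x : ℝ => Real.exp (-(|x|^s))) (-t) := by
    refine setIntegral_congr_fun measurableSet_Iic (fun t _ => ?_)
    simp [abs_neg]
  have hre := integral_comp_neg_Iic (0:ℝ) (fun x => Real.exp (-(|x|^s)))
  rw [h0, hre]
  have h1 : ∫ t in Set.Ioi (-(0:ℝ)), Real.exp (-(|t|^s))
      = ∫ t in Set.Ioi (0:ℝ), Real.exp (-(t^s)) := by
    rw [neg_zero]
    refine setIntegral_congr_fun measurableSet_Ioi (fun t ht => ?_)
    rw [abs_of_pos ht]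
  rw [h1]
  have h2 : ∫ t in Set.Ioi (0:ℝ), Real.exp (-(t^s))
      = ∫ t in Set.Ioi (0:ℝ), t ^ (0:ℝ) * Real.exp (-(t^s)) := by
    refine setIntegral_congr_fun measurableSet_Ioi (fun t ht => ?_)
    rw [Real.rpow_zero, one_mul]
  rw [h2, integral_rpow_mul_exp_neg_rpow hs (by norm_num)]
  rw [zero_add]
  ring

variable {s : ℝ}

lemma bgn_psi_ii (hs : 0 < s) (a b : ℝ) :
    IntervalIntegrable (fun t : ℝ => t ^ (1/s - 1) * Real.exp (-t)) volume a b := by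
  have h : (-1:ℝ) < 1/s - 1 := by
    have : 0 < 1/s := by positivity
    linarith
  exact (intervalIntegral.intervalIntegrable_rpow' h).mul_continuousOn
    (Continuous.continuousOn (by continuity))

lemma bgn_FG_strictMono (hs : 0 < s) (FΓ : ℝ → ℝ)
    (hFΓ : ∀ x, 0 ≤ x → FΓ x = (∫ t in (0:ℝ)..x, t ^ (1 / s - 1) * Real.exp (-t)) /
      Real.Gamma (1 / s)) :
    StrictMonoOn FΓ (Set.Ici 0) := by
  intro a ha b hb hab
  rw [hFΓ a ha, hFΓ b hb]
  have hΓ : 0 < Real.Gamma (1/s) := Real.Gamma_pos_of_pos (by positivity)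
  rw [div_lt_div_iff_of_pos_right hΓ]
  have hsplit : ∫ t in (0:ℝ)..b, t ^ (1/s-1) * Real.exp (-t)
      = (∫ t in (0:ℝ)..a, t ^ (1/s-1) * Real.exp (-t))
        + ∫ t in a..b, t ^ (1/s-1) * Real.exp (-t) :=
    (intervalIntegral.integral_add_adjacent_intervals (bgn_psi_ii hs 0 a) (bgn_psi_ii hs a b)).symm
  rw [hsplit]
  have hpos : 0 < ∫ t in a..b, t ^ (1/s-1) * Real.exp (-t) := by
    refine intervalIntegral.intervalIntegral_pos_of_pos_on (bgn_psi_ii hs a b) ?_ hab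
    intro t ht
    have ht0 : 0 < t := lt_of_le_of_lt (mem_Ici.mp ha) ht.1
    positivity
  linarith

lemma bgn_FG_zero (hs : 0 < s) (FΓ : ℝ → ℝ)
    (hFΓ : ∀ x, 0 ≤ x → FΓ x = (∫ t in (0:ℝ)..x, t ^ (1 / s - 1) * Real.exp (-t)) /
      Real.Gamma (1 / s)) : FΓ 0 = 0 := by
  rw [hFΓ 0 le_rfl, intervalIntegral.integral_same, zero_div]

lemma bgn_FG_nonneg (hs : 0 < s) (FΓ : ℝ → ℝ)
    (hFΓ : ∀ x, 0 ≤ x → FΓ x = (∫ t in (0:ℝ)..x, t ^ (1 / s - 1) * Real.exp (-t)) /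
      Real.Gamma (1 / s)) {x : ℝ} (hx : 0 ≤ x) : 0 ≤ FΓ x := by
  rcases eq_or_lt_of_le hx with h | h
  · rw [← h, bgn_FG_zero hs FΓ hFΓ]
  · have := bgn_FG_strictMono hs FΓ hFΓ (Set.self_mem_Ici) (le_of_lt h) h
    rw [bgn_FG_zero hs FΓ hFΓ] at this
    exact this.le

lemma bgn_FG_lt_one (hs : 0 < s) (FΓ : ℝ → ℝ)
    (hFΓ : ∀ x, 0 ≤ x → FΓ x = (∫ t in (0:ℝ)..x, t ^ (1 / s - 1) * Real.exp (-t)) /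
      Real.Gamma (1 / s)) {x : ℝ} (hx : 0 ≤ x) : FΓ x < 1 := by
  have h1s : 0 < 1/s := by positivity
  have hΓ : 0 < Real.Gamma (1/s) := Real.Gamma_pos_of_pos h1s
  rw [hFΓ x hx, div_lt_one hΓ]
  have hψint : IntegrableOn (fun t : ℝ => t ^ (1/s-1) * Real.exp (-t)) (Set.Ioi 0) := by
    refine IntegrableOn.congr_fun (Real.GammaIntegral_convergent h1s) (fun t _ => ?_)
      measurableSet_Ioi
    ring
  have hΓint : Real.Gamma (1/s) = ∫ t in Set.Ioi (0:ℝ), t ^ (1/s-1) * Real.exp (-t) := by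
    rw [Real.Gamma_eq_integral h1s]
    exact setIntegral_congr_fun measurableSet_Ioi (fun t _ => by ring)
  have hsplit : ∫ t in Set.Ioi (0:ℝ), t ^ (1/s-1) * Real.exp (-t)
      = (∫ t in Set.Ioc (0:ℝ) x, t ^ (1/s-1) * Real.exp (-t))
        + ∫ t in Set.Ioi x, t ^ (1/s-1) * Real.exp (-t) := by
    rw [← setIntegral_union]
    · rw [Set.Ioc_union_Ioi_eq_Ioi hx]
    · exact Set.Ioc_disjoint_Ioi le_rfl
    · exact measurableSet_Ioi
    · exact hψint.mono_set Set.Ioc_subset_Ioi_self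
    · exact hψint.mono_set (Set.Ioi_subset_Ioi hx)
  have htail : 0 < ∫ t in Set.Ioi x, t ^ (1/s-1) * Real.exp (-t) := by
    have h1 : 0 < ∫ t in Set.Ioc x (x+1), t ^ (1/s-1) * Real.exp (-t) := by
      rw [← intervalIntegral.integral_of_le (by linarith : x ≤ x + 1)]
      refine intervalIntegral.intervalIntegral_pos_of_pos_on (bgn_psi_ii hs x (x+1)) ?_
        (by linarith)
      intro t ht
      have ht0 : 0 < t := lt_of_le_of_lt hx ht.1
      positivity
    refine lt_of_lt_of_le h1 (setIntegral_mono_set (hψint.mono_set (Set.Ioi_subset_Ioi hx)) ?_ ?_)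
    · filter_upwards [ae_restrict_mem measurableSet_Ioi] with t ht
      have ht0 : 0 < t := lt_of_le_of_lt hx ht
      positivity
    · exact HasSubset.Subset.eventuallyLE Set.Ioc_subset_Ioi_self
  rw [intervalIntegral.integral_of_le hx]
  rw [hΓint, hsplit]
  linarith

variable {s : ℝ}

lemma bgn_Iic_pos (hs : 0 < s) {z : ℝ} (hz : 0 ≤ z) :
    ∫ t in Set.Iic z, Real.exp (-(|t|^s))
      = Real.Gamma (1/s)/s + ∫ t in (0:ℝ)..z, Real.exp (-(t^s)) := by
  have hIoc : IntegrableOn (fun t : ℝ => Real.exp (-(|t|^s))) (Set.Ioc 0 z) := by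
    refine IntegrableOn.congr_fun ((bgn_intOn_Ioi hs).mono_set Set.Ioc_subset_Ioi_self)
      (fun t ht => ?_) measurableSet_Ioc
    rw [abs_of_pos ht.1]
  have hsplit : ∫ t in Set.Iic z, Real.exp (-(|t|^s))
      = (∫ t in Set.Iic (0:ℝ), Real.exp (-(|t|^s)))
        + ∫ t in Set.Ioc (0:ℝ) z, Real.exp (-(|t|^s)) := by
    rw [← setIntegral_union]
    · rw [Set.Iic_union_Ioc_eq_Iic hz]
    · exact Set.Iic_disjoint_Ioc le_rfl
    · exact measurableSet_Ioc
    · exact bgn_intOn_Iic hs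
    · exact hIoc
  rw [hsplit, bgn_I0 hs]
  congr 1
  rw [intervalIntegral.integral_of_le hz]
  exact setIntegral_congr_fun measurableSet_Ioc fun t ht => by rw [abs_of_pos ht.1]

lemma bgn_Iic_neg (hs : 0 < s) {z : ℝ} (hz : z < 0) :
    ∫ t in Set.Iic z, Real.exp (-(|t|^s))
      = Real.Gamma (1/s)/s - ∫ t in (0:ℝ)..(-z), Real.exp (-(t^s)) := by
  have hIoc : IntegrableOn (fun t : ℝ => Real.exp (-(|t|^s))) (Set.Ioc z 0) :=
    (bgn_intOn_Iic hs).mono_set Set.Ioc_subset_Iic_self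
  have hsplit : ∫ t in Set.Iic (0:ℝ), Real.exp (-(|t|^s))
      = (∫ t in Set.Iic z, Real.exp (-(|t|^s)))
        + ∫ t in Set.Ioc z 0, Real.exp (-(|t|^s)) := by
    rw [← setIntegral_union]
    · rw [Set.Iic_union_Ioc_eq_Iic hz.le]
    · exact Set.Iic_disjoint_Ioc le_rfl
    · exact measurableSet_Ioc
    · exact (bgn_intOn_Iic hs).mono_set (Set.Iic_subset_Iic.mpr hz.le)
    · exact hIoc
  have hrefl : ∫ t in (0:ℝ)..(-z), Real.exp (-(t^s))
      = ∫ t in Set.Ioc z 0, Real.exp (-(|t|^s)) := by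
    have h1 : ∫ t in (0:ℝ)..(-z), Real.exp (-(t^s))
        = ∫ t in (0:ℝ)..(-z), (fun x : ℝ => Real.exp (-(|x|^s))) (-t) := by
      refine intervalIntegral.integral_congr (fun t ht => ?_)
      rw [Set.uIcc_of_le (by linarith : (0:ℝ) ≤ -z)] at ht
      simp only [abs_neg]
      rw [abs_of_nonneg ht.1]
    rw [h1, intervalIntegral.integral_comp_neg (fun x : ℝ => Real.exp (-(|x|^s)))]
    rw [neg_neg, neg_zero, intervalIntegral.integral_of_le hz.le]
  rw [hrefl]
  rw [bgn_I0 hs] at hsplit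
  linarith

variable {s : ℝ}

section
variable (hs : 0 < s) (φ Φ FΓ : ℝ → ℝ)
  (hφ : ∀ z, φ z = s / (2 * Real.Gamma (1 / s)) * Real.exp (-(|z| ^ s)))
  (hΦ : ∀ z, Φ z = ∫ t in Set.Iic z, φ t)
  (hFΓ : ∀ x, 0 ≤ x → FΓ x = (∫ t in (0:ℝ)..x, t ^ (1 / s - 1) * Real.exp (-t)) /
      Real.Gamma (1 / s))

include hs hφ hΦ hFΓ

lemma bgn_Phi_base (z : ℝ) :
    Φ z = s / (2 * Real.Gamma (1/s)) * ∫ t in Set.Iic z, Real.exp (-(|t|^s)) := by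
  rw [hΦ z, ← integral_const_mul]
  exact setIntegral_congr_fun measurableSet_Iic fun t _ => hφ t

lemma bgn_Phi_pos {z : ℝ} (hz : 0 ≤ z) : Φ z = 1/2 + FΓ (z^s) / 2 := by
  have hΓ : 0 < Real.Gamma (1/s) := Real.Gamma_pos_of_pos (by positivity)
  have h1 := bgn_Phi_base hs φ Φ FΓ hφ hΦ hFΓ z
  rw [bgn_Iic_pos hs hz, bgn_sub hs hz] at h1
  have h2 := hFΓ (z^s) (Real.rpow_nonneg hz s)
  rw [h1, h2]
  field_simp

lemma bgn_Phi_neg {z : ℝ} (hz : z < 0) : Φ z = 1/2 - FΓ ((-z)^s) / 2 := by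
  have hΓ : 0 < Real.Gamma (1/s) := Real.Gamma_pos_of_pos (by positivity)
  have h1 := bgn_Phi_base hs φ Φ FΓ hφ hΦ hFΓ z
  rw [bgn_Iic_neg hs hz, bgn_sub hs (by linarith : (0:ℝ) ≤ -z)] at h1
  have h2 := hFΓ ((-z)^s) (Real.rpow_nonneg (by linarith) s)
  rw [h1, h2]
  field_simp

end



section
variable {FΓ FΓinv : ℝ → ℝ}
  (hmono : StrictMonoOn FΓ (Set.Ici 0))
  (h0 : FΓ 0 = 0)
  (hlt : ∀ x, 0 ≤ x → FΓ x < 1)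
  (hinv : ∀ u ∈ Set.Ico (0:ℝ) 1, 0 ≤ FΓinv u ∧ FΓ (FΓinv u) = u)

include hmono hinv in
lemma bgn_J_eq {u : ℝ} (hu : u ∈ Set.Ico (0:ℝ) 1) : bgnJ FΓ u = FΓinv u := by
  obtain ⟨hinv0, hinveq⟩ := hinv u hu
  refine le_antisymm (csInf_le ⟨0, fun x hx => hx.1⟩ ⟨hinv0, hinveq.ge⟩) ?_
  refine le_csInf ⟨FΓinv u, hinv0, hinveq.ge⟩ ?_
  rintro x ⟨hx0, hxu⟩
  by_contra h
  push_neg at h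
  have := hmono (Set.mem_Ici.mpr hx0) (Set.mem_Ici.mpr hinv0) h
  rw [hinveq] at this
  linarith

include hmono hinv in
lemma bgn_inv_le {u c : ℝ} (hu : u ∈ Set.Ico (0:ℝ) 1) (hc : 0 ≤ c) :
    FΓinv u ≤ c ↔ u ≤ FΓ c := by
  obtain ⟨hinv0, hinveq⟩ := hinv u hu
  constructor
  · intro h
    calc u = FΓ (FΓinv u) := hinveq.symm
    _ ≤ FΓ c := hmono.monotoneOn (Set.mem_Ici.mpr hinv0) (Set.mem_Ici.mpr hc) h
  · intro h
    by_contra hcon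
    push_neg at hcon
    have := hmono (Set.mem_Ici.mpr hc) (Set.mem_Ici.mpr hinv0) hcon
    rw [hinveq] at this
    linarith

include hmono h0 hlt hinv in
lemma bgn_J_measurable : Measurable (bgnJ FΓ) := by
  have hne : ∀ u : ℝ, u < 1 → {x : ℝ | 0 ≤ x ∧ u ≤ FΓ x}.Nonempty := by
    intro u hu
    rcases le_or_gt 0 u with h | h
    · exact ⟨FΓinv u, (hinv u ⟨h, hu⟩).1, (hinv u ⟨h, hu⟩).2.ge⟩
    · exact ⟨0, le_rfl, by rw [h0]; linarith⟩
  have hbdd : ∀ u : ℝ, BddBelow {x : ℝ | 0 ≤ x ∧ u ≤ FΓ x} := by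
    intro u; exact ⟨0, fun x hx => hx.1⟩
  have hJ1 : ∀ u : ℝ, 1 ≤ u → bgnJ FΓ u = 0 := by
    intro u hu
    have : {x : ℝ | 0 ≤ x ∧ u ≤ FΓ x} = ∅ := by
      ext x
      simp only [Set.mem_setOf_eq, Set.mem_empty_iff_false, iff_false, not_and, not_le]
      intro hx0
      exact lt_of_lt_of_le (hlt x hx0) hu
    rw [bgnJ, this, Real.sInf_empty]
  have hJmono : ∀ u v : ℝ, u ≤ v → v < 1 → bgnJ FΓ u ≤ bgnJ FΓ v := by
    intro u v huv hv
    exact csInf_le_csInf (hbdd u) (hne v hv)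
      (fun x hx => ⟨hx.1, le_trans huv hx.2⟩)
  refine measurable_of_Iio (fun a => ?_)
  have hdecomp : bgnJ FΓ ⁻¹' Set.Iio a
      = {u : ℝ | u < 1 ∧ bgnJ FΓ u < a} ∪ (if 0 < a then Set.Ici (1:ℝ) else ∅) := by
    ext u
    simp only [Set.mem_preimage, Set.mem_Iio, Set.mem_union, Set.mem_setOf_eq]
    rcases lt_or_ge u 1 with h | h
    · constructor
      · intro hJ; exact Or.inl ⟨h, hJ⟩
      · rintro (⟨_, hJ⟩ | hmem)
        · exact hJ
        · split_ifs at hmem with ha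
          · exact absurd (Set.mem_Ici.mp hmem) (not_le.mpr h)
          · exact absurd hmem (Set.notMem_empty u)
    · rw [hJ1 u h]
      constructor
      · intro ha
        right
        rw [if_pos ha]
        exact h
      · rintro (⟨h', _⟩ | hmem)
        · linarith
        · split_ifs at hmem with ha
          · exact ha
          · exact absurd hmem (Set.notMem_empty u)
  rw [hdecomp]
  refine MeasurableSet.union ?_ (by split_ifs <;> simp)
  have : Set.OrdConnected {u : ℝ | u < 1 ∧ bgnJ FΓ u < a} := by
    constructor
    rintro x ⟨hx1, hxa⟩ y ⟨hy1, hya⟩ z hz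
    exact ⟨lt_of_le_of_lt hz.2 hy1, lt_of_le_of_lt (hJmono z y hz.2 hy1) hya⟩
  exact this.measurableSet

end

lemma bgn_rpow_le {s a z : ℝ} (hs : 0 < s) (ha : 0 ≤ a) (hz : 0 ≤ z) :
    a ^ (1/s) ≤ z ↔ a ≤ z ^ s := by
  have key : ∀ b : ℝ, 0 ≤ b → (b ^ (1/s)) ^ s = b := by
    intro b hb
    rw [← Real.rpow_mul hb, one_div, inv_mul_cancel₀ hs.ne', Real.rpow_one]
  constructor
  · intro h
    calc a = (a ^ (1/s)) ^ s := (key a ha).symm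
    _ ≤ z ^ s := Real.rpow_le_rpow (Real.rpow_nonneg ha _) h hs.le
  · intro h
    calc a ^ (1/s) ≤ (z ^ s) ^ (1/s) :=
      Real.rpow_le_rpow ha h (by positivity)
    _ = z := by
      rw [← Real.rpow_mul hz, mul_one_div, div_self hs.ne', Real.rpow_one]

lemma bgn_le_rpow {s a z : ℝ} (hs : 0 < s) (ha : 0 ≤ a) (hz : 0 ≤ z) :
    z ≤ a ^ (1/s) ↔ z ^ s ≤ a := by
  rcases eq_or_lt_of_le ha with h | h
  · subst h
    rw [Real.zero_rpow (by positivity : (1:ℝ)/s ≠ 0)]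
    constructor
    · intro hz0
      have : z = 0 := le_antisymm hz0 hz
      rw [this, Real.zero_rpow hs.ne']
    · intro h'
      have hzs : z ^ s ≤ 0 := h'
      have : z = 0 := by
        by_contra hne
        have : 0 < z := lt_of_le_of_ne hz (Ne.symm hne)
        exact absurd hzs (not_le.mpr (Real.rpow_pos_of_pos this s))
      rw [this]
  · constructor
    · intro h'
      calc z ^ s ≤ (a ^ (1/s)) ^ s := Real.rpow_le_rpow hz h' hs.le
      _ = a := by rw [← Real.rpow_mul h.le, one_div, inv_mul_cancel₀ hs.ne', Real.rpow_one]
    · intro h'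
      calc z = (z ^ s) ^ (1/s) := by
            rw [← Real.rpow_mul hz, mul_one_div, div_self hs.ne', Real.rpow_one]
      _ ≤ a ^ (1/s) := Real.rpow_le_rpow (Real.rpow_nonneg hz _) h' (by positivity)

lemma bgn_le_inv {FΓ FΓinv : ℝ → ℝ}
    (hmono : StrictMonoOn FΓ (Set.Ici 0))
    (hinv : ∀ u ∈ Set.Ico (0:ℝ) 1, 0 ≤ FΓinv u ∧ FΓ (FΓinv u) = u)
    {u c : ℝ} (hu : u ∈ Set.Ico (0:ℝ) 1) (hc : 0 ≤ c) :
    c ≤ FΓinv u ↔ FΓ c ≤ u := by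
  obtain ⟨hinv0, hinveq⟩ := hinv u hu
  constructor
  · intro h
    calc FΓ c ≤ FΓ (FΓinv u) := hmono.monotoneOn (Set.mem_Ici.mpr hc) (Set.mem_Ici.mpr hinv0) h
    _ = u := hinveq
  · intro h
    by_contra hcon
    push_neg at hcon
    have := hmono (Set.mem_Ici.mpr hinv0) (Set.mem_Ici.mpr hc) hcon
    rw [hinveq] at this
    linarith



theorem bgn_rng_correct (α β μ σ s : ℝ)
    (hα : 0 < α) (hβ : 0 < β) (hσ : 0 < σ) (hs : 0 < s)
    (φ : ℝ → ℝ) (hφ : ∀ z, φ z = s / (2 * Real.Gamma (1 / s)) * Real.exp (-(|z| ^ s)))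
    (Φ : ℝ → ℝ) (hΦ : ∀ z, Φ z = ∫ t in Set.Iic z, φ t)
    (B : ℝ) (hB : B = Real.Gamma α * Real.Gamma β / Real.Gamma (α + β))
    (FΓ : ℝ → ℝ)
    (hFΓ : ∀ x, 0 ≤ x → FΓ x = (∫ t in (0:ℝ)..x, t ^ (1 / s - 1) * Real.exp (-t)) /
      Real.Gamma (1 / s))
    (FΓinv : ℝ → ℝ)
    (hinv : ∀ u ∈ Set.Ico (0:ℝ) 1, 0 ≤ FΓinv u ∧ FΓ (FΓinv u) = u)
    {Ω : Type*} [MeasureSpace Ω] (ℙ : Measure Ω) [IsProbabilityMeasure ℙ]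
    (U : Ω → ℝ) (hU : Measurable U)
    (hUlaw : Measure.map U ℙ = volume.withDensity
      (fun u => ENNReal.ofReal
        (if 0 ≤ u ∧ u ≤ 1 then u ^ (α - 1) * (1 - u) ^ (β - 1) / B else 0)))
    (X : Ω → ℝ)
    (hXdef : ∀ ω, X ω = if U ω ≤ 1 / 2
      then μ - σ * (FΓinv (1 - 2 * U ω)) ^ (1 / s)
      else μ + σ * (FΓinv (2 * U ω - 1)) ^ (1 / s)) :
    ∀ x : ℝ, (Measure.map X ℙ (Set.Iic x)).toReal
      = (1 / B) * ∫ t in (0:ℝ)..(Φ ((x - μ) / σ)), t ^ (α - 1) * (1 - t) ^ (β - 1) := by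
  intro x
  classical
  have hB0 : 0 < B := by
    rw [hB]
    have h1 := Real.Gamma_pos_of_pos hα
    have h2 := Real.Gamma_pos_of_pos hβ
    have h3 := Real.Gamma_pos_of_pos (by linarith : 0 < α + β)
    positivity
  have hmono := bgn_FG_strictMono hs FΓ hFΓ
  have h0 := bgn_FG_zero hs FΓ hFΓ
  have hlt : ∀ y, 0 ≤ y → FΓ y < 1 := fun y hy => bgn_FG_lt_one hs FΓ hFΓ hy
  have hnn : ∀ y, 0 ≤ y → 0 ≤ FΓ y := fun y hy => bgn_FG_nonneg hs FΓ hFΓ hy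
  set ρ : ℝ → ENNReal := fun u => ENNReal.ofReal
    (if 0 ≤ u ∧ u ≤ 1 then u ^ (α - 1) * (1 - u) ^ (β - 1) / B else 0) with hρdef
  set z : ℝ := (x - μ) / σ with hzdef
  set c : ℝ := Φ z with hcdef
  have hxz : x = μ + z * σ := by rw [hzdef]; field_simp; ring
  -- bounds on c
  have hc01 : 0 < c ∧ c < 1 := by
    rcases le_or_gt 0 z with hz0 | hz0
    · have hcval : c = 1/2 + FΓ (z^s)/2 := by
        rw [hcdef, bgn_Phi_pos hs φ Φ FΓ hφ hΦ hFΓ hz0]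
      have h1 := hnn _ (Real.rpow_nonneg hz0 s)
      have h2 := hlt _ (Real.rpow_nonneg hz0 s)
      exact ⟨by rw [hcval]; linarith, by rw [hcval]; linarith⟩
    · have hcval : c = 1/2 - FΓ ((-z)^s)/2 := by
        rw [hcdef, bgn_Phi_neg hs φ Φ FΓ hφ hΦ hFΓ hz0]
      have h1 := hnn _ (Real.rpow_nonneg (by linarith : (0:ℝ) ≤ -z) s)
      have h2 := hlt _ (Real.rpow_nonneg (by linarith : (0:ℝ) ≤ -z) s)
      exact ⟨by rw [hcval]; linarith, by rw [hcval]; linarith⟩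
  obtain ⟨hc0, hc1⟩ := hc01
  -- measurable version of the transform
  have hJmeas := bgn_J_measurable (FΓinv := FΓinv) hmono h0 hlt hinv
  obtain ⟨hfun, hhdef, hmeas_h⟩ : ∃ h : ℝ → ℝ, (∀ u, h u = if u ≤ 1/2
      then μ - σ * (bgnJ FΓ (1 - 2*u)) ^ (1/s)
      else μ + σ * (bgnJ FΓ (2*u - 1)) ^ (1/s)) ∧ Measurable h :=
    ⟨_, fun u => rfl, bgn_hfun_measurable _ hJmeas⟩
  have hρmeas : Measurable ρ := by rw [hρdef]; exact bgn_rho_measurable α β B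
  -- U lands in (0,1) a.s.
  have hU01 : ∀ᵐ ω ∂ℙ, U ω ∈ Set.Ioo (0:ℝ) 1 := by
    rw [ae_iff]
    have hset : {ω | ¬ U ω ∈ Set.Ioo (0:ℝ) 1} = U ⁻¹' (Set.Ioo (0:ℝ) 1)ᶜ := rfl
    rw [hset, ← Measure.map_apply hU measurableSet_Ioo.compl, hUlaw,
      withDensity_apply _ measurableSet_Ioo.compl]
    rw [lintegral_eq_zero_iff hρmeas]
    have hnull : (volume.restrict ((Set.Ioo (0:ℝ) 1)ᶜ)) ({0,1} : Set ℝ) = 0 := by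
      refine le_antisymm (le_trans (Measure.restrict_apply_le _ _) ?_) (zero_le)
      rw [Set.Finite.measure_zero (Set.toFinite _) volume]
    filter_upwards [ae_restrict_mem measurableSet_Ioo.compl,
      (measure_eq_zero_iff_ae_notMem).mp hnull] with u hu hu2
    have hcond : ¬ (0 ≤ u ∧ u ≤ 1) := by
      rintro ⟨ha, hb⟩
      rcases eq_or_lt_of_le ha with h | h
      · exact hu2 (by simp [← h])
      rcases eq_or_lt_of_le hb with h' | h'
      · exact hu2 (by simp [h'])
      · exact hu ⟨h, h'⟩
    rw [hρdef]
    simp [hcond]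
  -- X agrees a.e. with hfun ∘ U
  have hae : X =ᵐ[ℙ] hfun ∘ U := by
    filter_upwards [hU01] with ω hω
    rw [hXdef ω, Function.comp_apply, hhdef (U ω)]
    by_cases h2 : U ω ≤ 1/2
    · rw [if_pos h2, if_pos h2,
        bgn_J_eq hmono hinv ⟨by linarith [hω.2], by linarith [hω.1]⟩]
    · push_neg at h2
      rw [if_neg (not_le.mpr h2), if_neg (not_le.mpr h2),
        bgn_J_eq hmono hinv ⟨by linarith, by linarith [hω.2]⟩]
  -- the key equivalence on (0,1)
  have hiff : ∀ u ∈ Set.Ioo (0:ℝ) 1, (hfun u ≤ x ↔ u ≤ c) := by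
    intro u hu
    obtain ⟨hu0, hu1⟩ := hu
    by_cases h2 : u ≤ 1/2
    · have hv : (1 - 2*u) ∈ Set.Ico (0:ℝ) 1 := ⟨by linarith, by linarith⟩
      have hJv : bgnJ FΓ (1 - 2*u) = FΓinv (1 - 2*u) := bgn_J_eq hmono hinv hv
      have hFv0 : 0 ≤ FΓinv (1 - 2*u) := (hinv _ hv).1
      have hFv0' : 0 ≤ (FΓinv (1 - 2*u)) ^ ((1:ℝ)/s) := Real.rpow_nonneg hFv0 _
      rw [hhdef u, if_pos h2, hJv]
      rcases le_or_gt 0 z with hz0 | hz0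
      · have hcval : c = 1/2 + FΓ (z^s)/2 := by
          rw [hcdef, bgn_Phi_pos hs φ Φ FΓ hφ hΦ hFΓ hz0]
        have h1 := hnn _ (Real.rpow_nonneg hz0 s)
        refine iff_of_true ((bgn_alg1 hσ hxz).mpr (by linarith)) (by rw [hcval]; linarith)
      · have hcval : c = 1/2 - FΓ ((-z)^s)/2 := by
          rw [hcdef, bgn_Phi_neg hs φ Φ FΓ hφ hΦ hFΓ hz0]
        have hw0 : (0:ℝ) ≤ (-z)^s := Real.rpow_nonneg (by linarith) s
        rw [bgn_alg1 hσ hxz, bgn_le_rpow hs hFv0 (by linarith : (0:ℝ) ≤ -z),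
          bgn_le_inv hmono hinv hv hw0, hcval]
        constructor <;> intro h' <;> linarith
    · push_neg at h2
      have hv : (2*u - 1) ∈ Set.Ico (0:ℝ) 1 := ⟨by linarith, by linarith⟩
      have hJv : bgnJ FΓ (2*u - 1) = FΓinv (2*u - 1) := bgn_J_eq hmono hinv hv
      have hFv0 : 0 ≤ FΓinv (2*u - 1) := (hinv _ hv).1
      have hFv0' : 0 ≤ (FΓinv (2*u - 1)) ^ ((1:ℝ)/s) := Real.rpow_nonneg hFv0 _
      rw [hhdef u, if_neg (not_le.mpr h2), hJv]
      rcases le_or_gt 0 z with hz0 | hz0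
      · have hcval : c = 1/2 + FΓ (z^s)/2 := by
          rw [hcdef, bgn_Phi_pos hs φ Φ FΓ hφ hΦ hFΓ hz0]
        rw [bgn_alg2 hσ hxz, bgn_rpow_le hs hFv0 hz0,
          bgn_inv_le hmono hinv hv (Real.rpow_nonneg hz0 s), hcval]
        constructor <;> intro h' <;> linarith
      · have hcval : c = 1/2 - FΓ ((-z)^s)/2 := by
          rw [hcdef, bgn_Phi_neg hs φ Φ FΓ hφ hΦ hFΓ hz0]
        have hw0 : (0:ℝ) ≤ (-z)^s := Real.rpow_nonneg (by linarith) s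
        have h1 := hnn _ hw0
        refine iff_of_false (fun h' => ?_) (not_le.mpr (by rw [hcval]; linarith))
        have := (bgn_alg2 hσ hxz).mp h'
        linarith
  -- rewrite the measure
  rw [Measure.map_congr hae, ← Measure.map_map hmeas_h hU, hUlaw]
  rw [Measure.map_apply hmeas_h measurableSet_Iic]
  have hAmeas : MeasurableSet (hfun ⁻¹' (Set.Iic x)) := hmeas_h measurableSet_Iic
  rw [withDensity_apply _ hAmeas]
  -- restriction helper
  have hrestr : ∀ S : Set ℝ, MeasurableSet S →
      (∫⁻ u in S, ρ u) = ∫⁻ u in S ∩ Set.Ioo 0 1, ρ u := by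
    intro S hS
    rw [← lintegral_indicator hS, ← lintegral_indicator (hS.inter measurableSet_Ioo)]
    refine lintegral_congr_ae ?_
    have hnull : volume ({0,1} : Set ℝ) = 0 :=
      Set.Finite.measure_zero (Set.toFinite _) _
    filter_upwards [(measure_eq_zero_iff_ae_notMem).mp hnull] with u hu
    by_cases hmem : u ∈ Set.Ioo (0:ℝ) 1
    · by_cases hmemS : u ∈ S
      · rw [Set.indicator_of_mem hmemS, Set.indicator_of_mem (Set.mem_inter hmemS hmem)]
      · rw [Set.indicator_of_notMem hmemS,
          Set.indicator_of_notMem (fun h => hmemS h.1)]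
    · have hcond : ¬ (0 ≤ u ∧ u ≤ 1) := by
        rintro ⟨ha, hb⟩
        rcases eq_or_lt_of_le ha with h | h
        · exact hu (by simp [← h])
        rcases eq_or_lt_of_le hb with h' | h'
        · exact hu (by simp [h'])
        · exact hmem ⟨h, h'⟩
      have hρ0 : ρ u = 0 := by rw [hρdef]; simp [hcond]
      rw [Set.indicator_apply, Set.indicator_apply]
      split_ifs <;> simp [hρ0]
  have hseteq : hfun ⁻¹' (Set.Iic x) ∩ Set.Ioo 0 1 = Set.Ioc 0 c ∩ Set.Ioo 0 1 := by
    ext u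
    simp only [Set.mem_inter_iff, Set.mem_preimage, Set.mem_Iic, Set.mem_Ioc, Set.mem_Ioo]
    constructor
    · rintro ⟨h1, h2⟩
      exact ⟨⟨h2.1, (hiff u h2).mp h1⟩, h2⟩
    · rintro ⟨h1, h2⟩
      exact ⟨(hiff u h2).mpr h1.2, h2⟩
  have e1 : ∫⁻ u in hfun ⁻¹' (Set.Iic x), ρ u = ∫⁻ u in Set.Ioc 0 c, ρ u := by
    rw [hrestr _ hAmeas, hrestr _ measurableSet_Ioc, hseteq]
  rw [e1]
  have e2 : ∫⁻ u in Set.Ioc 0 c, ρ u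
      = ∫⁻ u in Set.Ioc 0 c, ENNReal.ofReal (u ^ (α - 1) * (1 - u) ^ (β - 1) / B) := by
    refine setLIntegral_congr_fun measurableSet_Ioc (fun u hu => ?_)
    rw [hρdef]
    simp only []
    rw [if_pos ⟨hu.1.le, le_trans hu.2 hc1.le⟩]
  rw [e2]
  have e3 : ∫ u in Set.Ioc 0 c, u ^ (α - 1) * (1 - u) ^ (β - 1) / B
      = (∫⁻ u in Set.Ioc 0 c, ENNReal.ofReal (u ^ (α - 1) * (1 - u) ^ (β - 1) / B)).toReal := by
    refine integral_eq_lintegral_of_nonneg_ae ?_ ?_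
    · filter_upwards [ae_restrict_mem measurableSet_Ioc] with u hu
      have h1u : 0 ≤ 1 - u := by linarith [le_trans hu.2 hc1.le]
      exact div_nonneg (mul_nonneg (Real.rpow_nonneg hu.1.le _)
        (Real.rpow_nonneg h1u _)) hB0.le
    · exact ((bgn_g_measurable α β).div_const B).aestronglyMeasurable
  rw [← e3, intervalIntegral.integral_of_le hc0.le, integral_div]
  ring
end
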